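/- For λ ∈ (0, 1/4], the mechanism MinMax2P_λ has unbounded consistency with respect to maximum distance: on the instance with one agent at 0 and one agent at 1 with correct predictions π_1 = 0 and π_2 = 1, the optimal maximum distance is 0, but MinMax2P_λ locates facilities at λ and 1-λ, giving maximum distance λ > 0. Hence no finite multiplicative approximation ratio holds. -/
import Mathlib


/-- Maximum distance of two facility locations `y1, y2` for agents `x`. -/
noncomputable def maxDist2 {n : ℕ} (x : Fin (n + 1) → ℝ) (y1 y2 : ℝ) : ℝ :=
  Finset.univ.sup' Finset.univ_nonempty (fun i => min |x i - y1| |x i - y2|)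

/-- The MinMax2P_λ facility locations: truncate π₁ to [λ, 1-3λ], π₂ to [3λ, 1-λ],
then apply median(x₁, ·, xₙ) to each. -/
noncomputable def minmax2Pl (l x1 xn π1 π2 : ℝ) : ℝ × ℝ :=
  (max x1 (min (max l (min π1 (1 - 3 * l))) xn),
   max x1 (min (max (3 * l) (min π2 (1 - l))) xn))

lemma sup2 (f : Fin 2 → ℝ) : Finset.univ.sup' Finset.univ_nonempty f = max (f 0) (f 1) := by
  apply le_antisymm
  · apply Finset.sup'_le; intro i _; fin_cases i
    · exact le_max_left _ _
    · exact le_max_right _ _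
  · exact max_le (Finset.le_sup' f (Finset.mem_univ 0)) (Finset.le_sup' f (Finset.mem_univ 1))

/-- MinMax2P_λ has unbounded consistency with respect to maximum distance for
λ ∈ (0, 1/4]: with one agent at 0, one at 1 and correct predictions π₁ = 0,
π₂ = 1, the optimal maximum distance is 0 but the mechanism locates facilities
at λ and 1-λ with maximum distance λ > 0, so no finite ratio holds. -/
theorem stmt_13 (l : ℝ) (hl : l ∈ Set.Ioc (0 : ℝ) (1 / 4))
    (x : Fin 2 → ℝ) (h0 : x 0 = 0) (h1 : x 1 = 1) :
    maxDist2 x 0 1 = 0 ∧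
    (minmax2Pl l (x 0) (x 1) 0 1 = (l, 1 - l)) ∧
    maxDist2 x (minmax2Pl l (x 0) (x 1) 0 1).1 (minmax2Pl l (x 0) (x 1) 0 1).2 = l ∧
    0 < l ∧
    ∀ α : ℝ, ¬ (maxDist2 x (minmax2Pl l (x 0) (x 1) 0 1).1
        (minmax2Pl l (x 0) (x 1) 0 1).2 ≤ α * maxDist2 x 0 1) := by
  obtain ⟨hl0, hl4⟩ := hl
  have hopt : maxDist2 x 0 1 = 0 := by
    rw [maxDist2, sup2]
    rw [h0, h1]
    norm_num
  have hmech : minmax2Pl l (x 0) (x 1) 0 1 = (l, 1 - l) := by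
    rw [minmax2Pl, h0, h1]
    rw [min_eq_left (by linarith : (0:ℝ) ≤ 1 - 3 * l),
        max_eq_left hl0.le,
        min_eq_left (by linarith : l ≤ 1),
        max_eq_right hl0.le,
        min_eq_right (by linarith : 1 - l ≤ 1),
        max_eq_right (by linarith : 3 * l ≤ 1 - l),
        min_eq_left (by linarith : 1 - l ≤ 1),
        max_eq_right (by linarith : (0:ℝ) ≤ 1 - l)]
  have hach : maxDist2 x (minmax2Pl l (x 0) (x 1) 0 1).1 (minmax2Pl l (x 0) (x 1) 0 1).2 = l := by
    rw [hmech, maxDist2, sup2, h0, h1]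
    have h1l : |(0:ℝ) - l| = l := by rw [abs_of_nonpos (by linarith)]; ring
    have h2l : |(0:ℝ) - (1 - l)| = 1 - l := by rw [abs_of_nonpos (by linarith)]; ring
    have h3l : |(1:ℝ) - l| = 1 - l := by rw [abs_of_nonneg (by linarith)]
    have h4l : |(1:ℝ) - (1 - l)| = l := by rw [show (1:ℝ) - (1-l) = l by ring, abs_of_nonneg hl0.le]
    rw [h1l, h2l, h3l, h4l, min_eq_left (by linarith), min_eq_right (by linarith), max_self]
  refine ⟨hopt, hmech, hach, hl0, fun α h => ?_⟩
  rw [hach, hopt, mul_zero] at h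
  linarith
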